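/- arXiv:math/0512660 — 3 statements merged into one kernel-verified Lean document; each statement's English description precedes it below -/
import Mathlib

section
/- Define r̄ᴰ : ℝ₊ → ℝ by r̄ᴰ(t) = max(0, d - t·1_{t ≤ 1/μ} - ((ρ-1)/ρ · t + 1/λ)·1_{t > 1/μ}), where ρ = λ/μ, 1/μ < d, and μ < λ. Then r̄ᴰ is continuous on ℝ₊, r̄ᴰ(t) > 0 for t < ω̄₀* and r̄ᴰ(t) = 0 for t ≥ ω̄₀*, where ω̄₀* = (ρd - 1/μ)/(ρ - 1). Moreover sup_{t ≥ ω̄₀* - ξ} r̄ᴰ(t) = r̄ᴰ(ω̄₀* - ξ) = ((ρ-1)/ρ)·ξ for any 0 < ξ < ω̄₀* - 1/μ. -/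
/-!
With `κ = (ρ - 1) / ρ`, the late branch `d - (κ t + 1/λ)` is the line `κ (ω̄₀* - t)`, and it
meets the early branch `d - t` exactly at `t = 1/μ`, the early one lying above before and below
after. Hence `r̄ᴰ` is the positive part of the upper envelope of two decreasing lines, which makes
it continuous and antitone; it vanishes from `ω̄₀*` on because both lines do (`d < ω̄₀*`), and
past `1/μ` it equals `κ (ω̄₀* - t)`.
-/

def lineEnvelope (d κ ω t : ℝ) : ℝ := max (max (d - t) (κ * (ω - t))) 0

section LineEnvelope

variable {d κ ω : ℝ}

theorem continuous_lineEnvelope : Continuous (lineEnvelope d κ ω) := by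
  unfold lineEnvelope
  fun_prop

theorem antitone_lineEnvelope (hκ : 0 ≤ κ) : Antitone (lineEnvelope d κ ω) := by
  intro s t hst
  unfold lineEnvelope
  gcongr

theorem lineEnvelope_pos {t : ℝ} (hκ : 0 < κ) (ht : t < ω) : 0 < lineEnvelope d κ ω t :=
  (mul_pos hκ (sub_pos.2 ht)).trans_le ((le_max_right _ _).trans (le_max_left _ _))

theorem lineEnvelope_eq_zero {t : ℝ} (hκ : 0 ≤ κ) (hd : d ≤ ω) (ht : ω ≤ t) :
    lineEnvelope d κ ω t = 0 :=
  max_eq_right (max_le (by linarith) (mul_nonpos_of_nonneg_of_nonpos hκ (by linarith)))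

theorem lineEnvelope_eq_of_le {t : ℝ} (hκ : 0 ≤ κ) (ht : t ≤ ω) (h : d - t ≤ κ * (ω - t)) :
    lineEnvelope d κ ω t = κ * (ω - t) := by
  rw [lineEnvelope, max_eq_right h, max_eq_left (mul_nonneg hκ (sub_nonneg.2 ht))]

end LineEnvelope

section FluidBranches

variable {lam mu d rho omega : ℝ}

theorem late_branch_eq (hmu : mu ≠ 0) (hlam : lam ≠ 0) (hlm : lam ≠ mu) (hrho : rho = lam / mu)
    (homega : omega = (rho * d - 1 / mu) / (rho - 1)) (t : ℝ) :
    d - ((rho - 1) / rho * t + 1 / lam) = (rho - 1) / rho * (omega - t) := by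
  have : lam - mu ≠ 0 := sub_ne_zero.2 hlm
  subst hrho homega
  field_simp
  ring

theorem early_sub_late_branch (hmu : mu ≠ 0) (hlam : lam ≠ 0) (hlm : lam ≠ mu)
    (hrho : rho = lam / mu) (homega : omega = (rho * d - 1 / mu) / (rho - 1)) (t : ℝ) :
    (d - t) - (rho - 1) / rho * (omega - t) = (1 / mu - t) / rho := by
  rw [← late_branch_eq hmu hlam hlm hrho homega, hrho]
  field_simp
  ring

theorem fluid_eq_lineEnvelope (hmu : 0 < mu) (hlam : 0 < lam) (hlm : lam ≠ mu)
    (hrho : rho = lam / mu) (homega : omega = (rho * d - 1 / mu) / (rho - 1)) (t : ℝ) :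
    max (d - (if t ≤ 1 / mu then t else 0)
      - (if 1 / mu < t then (rho - 1) / rho * t + 1 / lam else 0)) 0
      = lineEnvelope d ((rho - 1) / rho) omega t := by
  have hrho0 : 0 < rho := hrho ▸ div_pos hlam hmu
  have hgap := early_sub_late_branch hmu.ne' hlam.ne' hlm hrho homega t
  rw [lineEnvelope]
  rcases le_or_gt t (1 / mu) with h | h
  · have hlate : (rho - 1) / rho * (omega - t) ≤ d - t := by
      have : 0 ≤ (1 / mu - t) / rho := div_nonneg (sub_nonneg.2 h) hrho0.le
      linarith
    rw [if_pos h, if_neg h.not_gt, sub_zero, max_eq_left hlate]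
  · have hearly : d - t ≤ (rho - 1) / rho * (omega - t) := by
      have : (1 / mu - t) / rho ≤ 0 := div_nonpos_of_nonpos_of_nonneg (by linarith) hrho0.le
      linarith
    rw [if_neg h.not_ge, if_pos h, sub_zero,
      late_branch_eq hmu.ne' hlam.ne' hlm hrho homega, max_eq_right hearly]

end FluidBranches

/-- Properties of the fluid limit `r̄ᴰ` of the smallest residual deadline in the
M/M/1+D EDF queue: continuity on `ℝ₊`, strict positivity before the fluid
first-loss time `ω̄₀*`, vanishing after it, and the value of the supremum over
`[ω̄₀* - ξ, ∞)`. -/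
theorem edf_first_atom_fluid_props (lam mu d : ℝ) (hmu : 0 < mu) (hlam : mu < lam)
    (hd : 1 / mu < d) (rho omega : ℝ) (hrho : rho = lam / mu)
    (homega : omega = (rho * d - 1 / mu) / (rho - 1))
    (r : ℝ → ℝ)
    (hr : ∀ t, r t = max (d - (if t ≤ 1 / mu then t else 0)
      - (if 1 / mu < t then (rho - 1) / rho * t + 1 / lam else 0)) 0) :
    ContinuousOn r (Set.Ici 0) ∧
    (∀ t, 0 ≤ t → t < omega → 0 < r t) ∧
    (∀ t, omega ≤ t → r t = 0) ∧
    (∀ ξ, 0 < ξ → ξ < omega - 1 / mu →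
      IsGreatest (r '' Set.Ici (omega - ξ)) (r (omega - ξ)) ∧
      r (omega - ξ) = (rho - 1) / rho * ξ) := by
  have hrho1 : 1 < rho := hrho ▸ (one_lt_div hmu).2 hlam
  have hκ : 0 < (rho - 1) / rho := div_pos (sub_pos.2 hrho1) (by linarith)
  have hgap := early_sub_late_branch hmu.ne' (hmu.trans hlam).ne' hlam.ne' hrho homega
  obtain rfl : r = lineEnvelope d ((rho - 1) / rho) omega :=
    funext fun t ↦ (hr t).trans
      (fluid_eq_lineEnvelope hmu (hmu.trans hlam) hlam.ne' hrho homega t)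
  have hdω : d < omega := by
    have : (1 / mu - d) / rho < 0 := div_neg_of_neg_of_pos (by linarith) (by linarith)
    exact sub_pos.1 (pos_of_mul_pos_right (by linarith [hgap d]) hκ.le)
  refine ⟨continuous_lineEnvelope.continuousOn, fun t _ ht ↦ lineEnvelope_pos hκ ht,
    fun t ht ↦ lineEnvelope_eq_zero hκ.le hdω.le ht, fun ξ _ hξω ↦ ⟨?_, ?_⟩⟩
  · exact (antitone_lineEnvelope hκ.le).map_isLeast isLeast_Ici
  · have hearly : d - (omega - ξ) ≤ (rho - 1) / rho * (omega - (omega - ξ)) := by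
      have : (1 / mu - (omega - ξ)) / rho ≤ 0 :=
        div_nonpos_of_nonpos_of_nonneg (by linarith) (by linarith)
      linarith [hgap (omega - ξ)]
    rw [lineEnvelope_eq_of_le hκ.le (by linarith) hearly, sub_sub_cancel]
end

section
/- Define the fluid limit measure ν̄*ᴰ_t of the M/M/1+D EDF queue by ⟨ν̄*ᴰ_t, f⟩ = f(d - t) - μ∫₀ᵗ f(r̄ᴰ(s) + s - t) ds + λ∫₀ᵗ f(d - s) ds, for f bounded càdlàg. Then for all t ≥ 0, ⟨ν̄*ᴰ_t, 1_{ℝ₊}⟩ = (1 + (λ - μ)t)·1_{t ≤ ω̄₀*} + λd·1_{t ≥ ω̄₀*}, where ω̄₀* = (ρd - 1/μ)/(ρ - 1) and ρ = λ/μ. -/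
/-!
The map `s ↦ r̄ᴰ(s) + s` equals `max (max s d) (d + (s - 1/μ)/ρ)`: it is constant `d` up to
`1/μ`, grows with slope `1/ρ` until it meets the diagonal at `ω̄₀*`, and is the identity after.
Hence for `s < t` it exceeds `t` exactly when `t < d` or `s > ρ(t - d) + 1/μ`, and the
integrand `1{r̄ᴰ(s) + s > t}` is the indicator of an interval `(a, t)` with `a` equal to `0`,
`ρ(t - d) + 1/μ` or `t` according as `t < d`, `d ≤ t ≤ ω̄₀*` or `t > ω̄₀*`. Both integrals are
therefore lengths of intervals, and the formula follows from `μρ = λ`.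
-/

open intervalIntegral MeasureTheory Set

namespace intervalIntegral

variable {f : ℝ → ℝ} {a b c y₁ y₂ : ℝ}

theorem integral_eq_of_eqOn_Ioo_of_eqOn_Ioo (hab : a ≤ b) (hbc : b ≤ c)
    (h₁ : EqOn f (fun _ ↦ y₁) (Ioo a b)) (h₂ : EqOn f (fun _ ↦ y₂) (Ioo b c)) :
    ∫ x in a..c, f x = (b - a) * y₁ + (c - b) * y₂ := by
  have hi₁ : IntervalIntegrable f volume a b :=
    intervalIntegrable_const.congr_uIoo (uIoo_of_le hab ▸ h₁.symm)
  have hi₂ : IntervalIntegrable f volume b c :=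
    intervalIntegrable_const.congr_uIoo (uIoo_of_le hbc ▸ h₂.symm)
  rw [← integral_add_adjacent_intervals hi₁ hi₂, integral_congr_Ioo_of_le hab h₁,
    integral_congr_Ioo_of_le hbc h₂, integral_const, integral_const, smul_eq_mul, smul_eq_mul]

theorem integral_ite_pos_eq_sub_of_iff_lt (hab : a ≤ b) (hbc : b ≤ c)
    (h : ∀ x ∈ Ioo a c, 0 < f x ↔ b < x) :
    ∫ x in a..c, (if 0 < f x then 1 else 0 : ℝ) = c - b := by
  rw [integral_eq_of_eqOn_Ioo_of_eqOn_Ioo hab hbc (y₁ := 0) (y₂ := 1)]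
  · ring
  · intro x hx
    simp [(h x ⟨hx.1, hx.2.trans_le hbc⟩).not.2 hx.2.le.not_gt]
  · intro x hx
    simp [(h x ⟨hab.trans_lt hx.1, hx.2⟩).2 hx.1]

theorem integral_ite_pos_eq_sub_of_iff_gt (hab : a ≤ b) (hbc : b ≤ c)
    (h : ∀ x ∈ Ioo a c, 0 < f x ↔ x < b) :
    ∫ x in a..c, (if 0 < f x then 1 else 0 : ℝ) = b - a := by
  rw [integral_eq_of_eqOn_Ioo_of_eqOn_Ioo hab hbc (y₁ := 1) (y₂ := 0)]
  · ring
  · intro x hx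
    simp [(h x ⟨hx.1, hx.2.trans_le hbc⟩).2 hx.2]
  · intro x hx
    simp [(h x ⟨hab.trans_lt hx.1, hx.2⟩).not.2 hx.1.le.not_gt]

end intervalIntegral

theorem integral_ite_sub_pos_eq_min {d t : ℝ} (ht : 0 ≤ t) (hd : 0 ≤ d) :
    ∫ s in (0:ℝ)..t, (if 0 < d - s then 1 else 0 : ℝ) = min t d := by
  rw [integral_ite_pos_eq_sub_of_iff_gt (le_min ht hd) (min_le_left t d), sub_zero]
  intro s hs
  rw [sub_pos, lt_min_iff, and_iff_right hs.2]

section FluidResidual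

noncomputable def fluidResidual (lam mu d rho s : ℝ) : ℝ :=
  max (d - (if s ≤ 1 / mu then s else 0)
    - (if 1 / mu < s then (rho - 1) / rho * s + 1 / lam else 0)) 0

variable {lam mu d rho : ℝ}

theorem fluidResidual_add_self (hmu : 0 < mu) (hlam : 0 < lam) (hd : 1 / mu < d)
    (hrho : rho = lam / mu) (s : ℝ) :
    fluidResidual lam mu d rho s + s = max (max s d) (d + (s - 1 / mu) / rho) := by
  have hρ : 0 < rho := hrho ▸ div_pos hlam hmu
  unfold fluidResidual
  split_ifs with hs hs' hs'
  · exact absurd hs' hs.not_gt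
  · have : (s - 1 / mu) / rho ≤ 0 := div_nonpos_of_nonpos_of_nonneg (by linarith) hρ.le
    rw [max_eq_left (by linarith : 0 ≤ d - s - 0), max_eq_right (by linarith : s ≤ d),
      max_eq_left (by linarith : d + (s - 1 / mu) / rho ≤ d)]
    ring
  · have hA : d - 0 - ((rho - 1) / rho * s + 1 / lam) + s = d + (s - 1 / mu) / rho := by
      subst hrho
      field_simp
      ring
    have : 0 < (s - 1 / mu) / rho := div_pos (by linarith [not_le.1 hs]) hρ
    rw [← max_add_add_right, hA, zero_add, max_assoc,
      max_eq_right (by linarith : d ≤ d + (s - 1 / mu) / rho), max_comm]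
  · exact absurd (not_le.1 hs) hs'

theorem fluidResidual_add_self_sub_pos_iff (hmu : 0 < mu) (hlam : 0 < lam) (hd : 1 / mu < d)
    (hrho : rho = lam / mu) {s t : ℝ} (hst : s < t) :
    0 < fluidResidual lam mu d rho s + s - t ↔ t < d ∨ rho * (t - d) + 1 / mu < s := by
  have hρ : 0 < rho := hrho ▸ div_pos hlam hmu
  have hthr : (t - d) * rho < s - 1 / mu ↔ rho * (t - d) + 1 / mu < s := by
    constructor <;> intro h <;> linarith
  rw [sub_pos, fluidResidual_add_self hmu hlam hd hrho, lt_max_iff, lt_max_iff,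
    ← sub_lt_iff_lt_add', lt_div_iff₀ hρ, hthr, iff_false_intro hst.le.not_gt, false_or]

theorem integral_ite_fluidResidual_of_lt (hmu : 0 < mu) (hlam : 0 < lam) (hd : 1 / mu < d)
    (hrho : rho = lam / mu) {t : ℝ} (ht : 0 ≤ t) (htd : t < d) :
    ∫ s in (0:ℝ)..t, (if 0 < fluidResidual lam mu d rho s + s - t then 1 else 0 : ℝ) = t := by
  rw [integral_ite_pos_eq_sub_of_iff_lt le_rfl ht, sub_zero]
  intro s hs
  simp only [fluidResidual_add_self_sub_pos_iff hmu hlam hd hrho hs.2, htd, true_or, hs.1]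

theorem integral_ite_fluidResidual_of_le (hmu : 0 < mu) (hlam : 0 < lam) (hd : 1 / mu < d)
    (hrho : rho = lam / mu) {t : ℝ} (hdt : d ≤ t) :
    ∫ s in (0:ℝ)..t, (if 0 < fluidResidual lam mu d rho s + s - t then 1 else 0 : ℝ)
      = t - min t (rho * (t - d) + 1 / mu) := by
  have hρ : 0 < rho := hrho ▸ div_pos hlam hmu
  have hmu' : 0 < 1 / mu := one_div_pos.2 hmu
  have hthr : 0 ≤ min t (rho * (t - d) + 1 / mu) :=
    le_min (by linarith) (by nlinarith [mul_nonneg hρ.le (sub_nonneg.2 hdt)])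
  refine integral_ite_pos_eq_sub_of_iff_lt hthr (min_le_left _ _) fun s hs ↦ ?_
  rw [fluidResidual_add_self_sub_pos_iff hmu hlam hd hrho hs.2, min_lt_iff,
    iff_false_intro hdt.not_gt, iff_false_intro hs.2.not_gt, false_or]

end FluidResidual

/-- Fluid approximation of the normalized queue length of the M/M/1+D EDF queue:
testing the fluid profile measure `ν̄*ᴰ_t` against the indicator of `(0,∞)` gives
`1 + (λ-μ)t` before the fluid first-loss time `ω̄₀*` and `λd` after. -/
theorem edf_fluid_queue_length (lam mu d : ℝ) (hmu : 0 < mu) (hlam : mu < lam)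
    (hd : 1 / mu < d) (rho omega : ℝ) (hrho : rho = lam / mu)
    (homega : omega = (rho * d - 1 / mu) / (rho - 1))
    (r : ℝ → ℝ)
    (hr : ∀ t, r t = max (d - (if t ≤ 1 / mu then t else 0)
      - (if 1 / mu < t then (rho - 1) / rho * t + 1 / lam else 0)) 0)
    (ind : ℝ → ℝ) (hind : ∀ x, ind x = if 0 < x then 1 else 0) :
    ∀ t : ℝ, 0 ≤ t →
      ind (d - t) - mu * (∫ s in (0:ℝ)..t, ind (r s + s - t))
          + lam * ∫ s in (0:ℝ)..t, ind (d - s)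
        = if t ≤ omega then 1 + (lam - mu) * t else lam * d := by
  intro t ht
  obtain rfl : r = fluidResidual lam mu d rho := funext hr
  have hlam0 : 0 < lam := hmu.trans hlam
  have hd0 : 0 < d := (one_div_pos.2 hmu).trans hd
  have hρ1 : 1 < rho := hrho ▸ (one_lt_div hmu).2 hlam
  have hthr : rho * (t - d) + 1 / mu ≤ t ↔ t ≤ omega := by
    rw [homega, le_div_iff₀ (sub_pos.2 hρ1)]
    constructor <;> intro h <;> linarith
  simp only [hind]
  rw [integral_ite_sub_pos_eq_min ht hd0.le]
  rcases lt_or_ge t d with htd | hdt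
  · have hto : t ≤ omega :=
      hthr.1 (by nlinarith [mul_neg_of_pos_of_neg (sub_pos.2 hρ1) (sub_neg.2 htd)])
    rw [integral_ite_fluidResidual_of_lt hmu hlam0 hd hrho ht htd, if_pos (sub_pos.2 htd),
      min_eq_left htd.le, if_pos hto]
    ring
  · rw [integral_ite_fluidResidual_of_le hmu hlam0 hd hrho hdt, if_neg (by linarith), min_eq_right hdt]
    split_ifs with hto
    · rw [min_eq_right (hthr.2 hto), hrho]
      field_simp
      ring
    · rw [min_eq_left (not_le.1 (mt hthr.1 hto)).le]
      ring
end

section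
/- With the same fluid limit measure ν̄*ᴰ_t, for all t ≥ 0, ⟨ν̄*ᴰ_t, 1_{ℝ₋}⟩ = (1 + λ(t - d) - μt)·1_{t ≥ ω̄₀*}, where 1_{ℝ₋} is the indicator of (-∞, 0] and ω̄₀* = (ρd - 1/μ)/(ρ-1). -/
/-!
For `s ≤ t`, the fluid customer that entered service at time `s` has left the system by time `t`
(`r̄ᴰ(s) + s ≤ t`) iff `d ≤ t` and `s ≤ ρ(t - d) + 1/μ`. Hence the three terms are `1_{d ≤ t}`,
`μ · min(t, ρ(t - d) + 1/μ) · 1_{d ≤ t}` and `λ (t - d)⁺`. Since `t ≤ ρ(t - d) + 1/μ` exactly when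
`ω̄₀* ≤ t`, after `ω̄₀*` the whole of `[0, t]` is served, while before it the terms cancel.
-/

open intervalIntegral MeasureTheory

theorem integral_ite_le {a b : ℝ} (hab : a ≤ b) (c : ℝ) :
    ∫ x in a..b, (if x ≤ c then (1 : ℝ) else 0) = max (min b c - a) 0 := by
  have hind : (fun x : ℝ => if x ≤ c then (1 : ℝ) else 0) = (Set.Iic c).indicator 1 := by
    ext x; simp [Set.indicator_apply]
  rw [integral_of_le hab, hind, integral_indicator_one measurableSet_Iic,
    measureReal_restrict_apply measurableSet_Iic, Set.inter_comm, Set.Ioc_inter_Iic,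
    Real.volume_real_Ioc]

theorem integral_ite_sub_nonpos {d t : ℝ} (hd : 0 < d) (ht : 0 ≤ t) :
    ∫ s in (0 : ℝ)..t, (if d - s ≤ 0 then (1 : ℝ) else 0) = max (t - d) 0 := by
  rw [integral_comp_sub_left (fun x => if x ≤ 0 then (1 : ℝ) else 0) d, sub_zero,
    integral_ite_le (by linarith) 0, min_eq_right hd.le]
  ring_nf

/-- The paper's `r̄ᴰ`, with `ρ = λ/μ`. -/
noncomputable def edfResidual (lam mu d t : ℝ) : ℝ :=
  max (d - (if t ≤ 1 / mu then t else 0)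
    - (if 1 / mu < t then (lam / mu - 1) / (lam / mu) * t + 1 / lam else 0)) 0

theorem edfResidual_add_le_iff {lam mu d s t : ℝ} (hmu : 0 < mu) (hlam : 0 < lam) (hst : s ≤ t) :
    edfResidual lam mu d s + s ≤ t ↔ d ≤ t ∧ s ≤ lam / mu * (t - d) + 1 / mu := by
  have hρ : 0 < lam / mu := div_pos hlam hmu
  rw [edfResidual, max_add, max_le_iff, zero_add, and_iff_left hst]
  by_cases hs : s ≤ 1 / mu
  · rw [if_pos hs, if_neg hs.not_gt, sub_zero, sub_add_cancel]
    constructor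
    · intro h
      exact ⟨h, by nlinarith⟩
    · exact And.left
  · have hslope : (lam / mu - 1) / (lam / mu) * s + 1 / lam = s - (s - 1 / mu) / (lam / mu) := by
      field_simp; ring
    rw [if_neg hs, if_pos (not_le.1 hs), hslope, sub_zero,
      show d - (s - (s - 1 / mu) / (lam / mu)) + s = d + (s - 1 / mu) / (lam / mu) by ring,
      ← le_sub_iff_add_le', div_le_iff₀' hρ]
    constructor
    · intro h
      exact ⟨by nlinarith, by linarith⟩
    · rintro ⟨-, h⟩
      linarith

theorem integral_ite_edfResidual_add_sub_nonpos {lam mu d t : ℝ} (hmu : 0 < mu) (hlam : 0 < lam)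
    (ht : 0 ≤ t) :
    ∫ s in (0 : ℝ)..t, (if edfResidual lam mu d s + s - t ≤ 0 then (1 : ℝ) else 0)
      = if d ≤ t then min t (lam / mu * (t - d) + 1 / mu) else 0 := by
  have hexit : Set.EqOn (fun s => if edfResidual lam mu d s + s - t ≤ 0 then (1 : ℝ) else 0)
      (fun s => if d ≤ t then (if s ≤ lam / mu * (t - d) + 1 / mu then 1 else 0) else 0)
      (Set.uIcc 0 t) := by
    intro s hs
    rw [Set.uIcc_of_le ht] at hs
    simp only [sub_nonpos, edfResidual_add_le_iff hmu hlam hs.2, ite_and]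
  rw [integral_congr hexit]
  split_ifs with hdt
  · have hc : 0 ≤ lam / mu * (t - d) + 1 / mu :=
      add_nonneg (mul_nonneg (div_pos hlam hmu).le (sub_nonneg.2 hdt)) (one_div_pos.2 hmu).le
    rw [integral_ite_le ht, sub_zero, max_eq_left (le_min ht hc)]
  · exact integral_zero

theorem div_sub_one_le_iff {ρ a d t : ℝ} (hρ : 1 < ρ) :
    (ρ * d - a) / (ρ - 1) ≤ t ↔ t ≤ ρ * (t - d) + a := by
  rw [div_le_iff₀ (sub_pos.2 hρ)]
  constructor <;> intro h <;> linarith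

theorem lt_div_sub_one {ρ a d : ℝ} (hρ : 1 < ρ) (had : a < d) : d < (ρ * d - a) / (ρ - 1) := by
  rw [lt_div_iff₀ (sub_pos.2 hρ)]
  linarith

/-- Fluid approximation of the normalized loss process of the M/M/1+D EDF queue:
testing the fluid profile measure `ν̄*ᴰ_t` against the indicator of `(-∞,0]` gives
`(1 + λ(t-d) - μt)·1_{t ≥ ω̄₀*}`. -/
theorem edf_fluid_loss_process (lam mu d : ℝ) (hmu : 0 < mu) (hlam : mu < lam)
    (hd : 1 / mu < d) (rho omega : ℝ) (hrho : rho = lam / mu)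
    (homega : omega = (rho * d - 1 / mu) / (rho - 1))
    (r : ℝ → ℝ)
    (hr : ∀ t, r t = max (d - (if t ≤ 1 / mu then t else 0)
      - (if 1 / mu < t then (rho - 1) / rho * t + 1 / lam else 0)) 0)
    (ind : ℝ → ℝ) (hind : ∀ x, ind x = if x ≤ 0 then 1 else 0) :
    ∀ t : ℝ, 0 ≤ t →
      ind (d - t) - mu * (∫ s in (0:ℝ)..t, ind (r s + s - t))
          + lam * ∫ s in (0:ℝ)..t, ind (d - s)
        = if omega ≤ t then 1 + lam * (t - d) - mu * t else 0 := by
  intro t ht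
  have hρ : 1 < lam / mu := (one_lt_div hmu).2 hlam
  have hd0 : 0 < d := (one_div_pos.2 hmu).trans hd
  subst hrho homega
  obtain rfl : r = edfResidual lam mu d := funext hr
  simp only [hind]
  rw [integral_ite_edfResidual_add_sub_nonpos hmu (hmu.trans hlam) ht,
    integral_ite_sub_nonpos hd0 ht]
  simp only [div_sub_one_le_iff hρ]
  by_cases hdt : d ≤ t
  · rw [if_pos (sub_nonpos.2 hdt), if_pos hdt, max_eq_left (sub_nonneg.2 hdt)]
    split_ifs with hω
    · rw [min_eq_left hω]; ring
    · rw [min_eq_right (not_le.1 hω).le]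
      field_simp
      ring
  · have hωt : ¬ t ≤ lam / mu * (t - d) + 1 / mu := by
      rw [← div_sub_one_le_iff hρ]
      exact fun h => hdt ((lt_div_sub_one hρ hd).trans_le h).le
    rw [if_neg (by linarith), if_neg hdt, if_neg hωt, max_eq_right (by linarith)]
    ring
end
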